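/- arXiv:2605.06803 — 3 statements merged into one kernel-verified Lean document; each statement's English description precedes it below -/
import Mathlib

section
/- Let L be a complete lattice, f : L → L, and B = [x^ℓ, x^u] a bound (x^ℓ ≤ x^u). Define lfp_B(g) = inf{x ∈ L : x ≥ x^ℓ ∧ g(x) ≤ x} and gfp_B(g) = sup{x ∈ L : x ≤ x^u ∧ x ≤ g(x)}, and F(B) = [lfp_B(f^ℓ_B), gfp_B(f^u_B)] where f^ℓ_B(x) = inf{f(y) : x ≤ y ≤ x^u} and f^u_B(x) = sup{f(y) : x^ℓ ≤ y ≤ x}. If B is sound (i.e., B contains some fixed point μ of f), then F(B) is sound: lfp_B(f^ℓ_B) ≤ μ ≤ gfp_B(f^u_B). -/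
theorem F_preserves_soundness
    {L : Type*} [CompleteLattice L] (f : L → L) (xl xu : L) (hB : xl ≤ xu)
    (flB fuB : L → L)
    (hflB : ∀ x, flB x = ⨅ y ∈ Set.Icc x xu, f y)
    (hfuB : ∀ x, fuB x = ⨆ y ∈ Set.Icc xl x, f y)
    (μ : L) (hfix : f μ = μ) (hμ : μ ∈ Set.Icc xl xu) :
    sInf {x | xl ≤ x ∧ flB x ≤ x} ≤ μ ∧ μ ≤ sSup {x | x ≤ xu ∧ x ≤ fuB x} := by
  constructor
  · apply sInf_le
    refine ⟨hμ.1, ?_⟩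
    rw [hflB]
    calc ⨅ y ∈ Set.Icc μ xu, f y ≤ f μ := biInf_le f ⟨le_refl μ, hμ.2⟩
      _ = μ := hfix
  · apply le_sSup
    refine ⟨hμ.2, ?_⟩
    rw [hfuB]
    calc μ = f μ := hfix.symm
      _ ≤ ⨆ y ∈ Set.Icc xl μ, f y := le_biSup f ⟨hμ.1, le_refl μ⟩
end

section
/- F is monotone on sound bounds: if B₁ = [a₁,b₁] and B₂ = [a₂,b₂] are both sound bounds for f (each contains some fixed point of f) and B₁ ⊆ B₂ (i.e., a₂ ≤ a₁ and b₁ ≤ b₂), then F(B₁) ⊆ F(B₂), i.e., lfp_{B₂}(f^ℓ_{B₂}) ≤ lfp_{B₁}(f^ℓ_{B₁}) and gfp_{B₁}(f^u_{B₁}) ≤ gfp_{B₂}(f^u_{B₂}). -/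
theorem F_monotone_on_sound_bounds
    {L : Type*} [CompleteLattice L] (f : L → L)
    (a₁ b₁ a₂ b₂ : L) (h₁ : a₁ ≤ b₁) (h₂ : a₂ ≤ b₂)
    (hsub : a₂ ≤ a₁ ∧ b₁ ≤ b₂)
    (μ₁ : L) (hfix₁ : f μ₁ = μ₁) (hμ₁ : μ₁ ∈ Set.Icc a₁ b₁)
    (μ₂ : L) (hfix₂ : f μ₂ = μ₂) (hμ₂ : μ₂ ∈ Set.Icc a₂ b₂)
    (fl₁ fu₁ fl₂ fu₂ : L → L)
    (hfl₁ : ∀ x, fl₁ x = ⨅ y ∈ Set.Icc x b₁, f y)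
    (hfu₁ : ∀ x, fu₁ x = ⨆ y ∈ Set.Icc a₁ x, f y)
    (hfl₂ : ∀ x, fl₂ x = ⨅ y ∈ Set.Icc x b₂, f y)
    (hfu₂ : ∀ x, fu₂ x = ⨆ y ∈ Set.Icc a₂ x, f y) :
    sInf {x | a₂ ≤ x ∧ fl₂ x ≤ x} ≤ sInf {x | a₁ ≤ x ∧ fl₁ x ≤ x} ∧
    sSup {x | x ≤ b₁ ∧ x ≤ fu₁ x} ≤ sSup {x | x ≤ b₂ ∧ x ≤ fu₂ x} := by
  constructor
  · apply sInf_le_sInf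
    rintro x ⟨hx1, hx2⟩
    refine ⟨hsub.1.trans hx1, le_trans ?_ hx2⟩
    rw [hfl₂, hfl₁]
    exact iInf_le_iInf_of_subset (Set.Icc_subset_Icc_right hsub.2)
  · apply sSup_le_sSup
    rintro x ⟨hx1, hx2⟩
    refine ⟨hx1.trans hsub.2, le_trans hx2 ?_⟩
    rw [hfu₂, hfu₁]
    exact iSup_le_iSup_of_subset (Set.Icc_subset_Icc_left hsub.1)
end

section
/- Every stable model of a normal logic program P is a minimal Herbrand model of P: if M = S_P(M) (M equals the least model of the reduct P_M), then M is a model of P and no proper subset of M is a model of P. -/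
/-- A rule of a propositional normal logic program:
`head ← pos, not neg`. -/
structure NormalRule (Atom : Type*) where
  head : Atom
  pos : Finset Atom
  neg : Finset Atom

/-- A rule of a positive program (the reducts are positive). -/
structure PosRule (Atom : Type*) where
  head : Atom
  body : Finset Atom

/-- The immediate consequence operator of a positive program. -/
def TP {Atom : Type*} (P : Set (PosRule Atom)) (M : Set Atom) : Set Atom :=
  {a | ∃ r ∈ P, r.head = a ∧ ↑r.body ⊆ M}

/-- The Gelfond–Lifschitz reduct `P_M`. -/
def reduct {Atom : Type*} (P : Set (NormalRule Atom)) (M : Set Atom) :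
    Set (PosRule Atom) :=
  {r | ∃ s ∈ P, (∀ c ∈ s.neg, c ∉ M) ∧ r = PosRule.mk s.head s.pos}

/-- The Gelfond–Lifschitz operator: least fixed point of `T_{P_M}`. -/
def glOp {Atom : Type*} (P : Set (NormalRule Atom)) (M : Set Atom) : Set Atom :=
  sInf {N : Set Atom | TP (reduct P M) N ⊆ N}

/-- `M` is a model of the normal program `P`. -/
def IsModel {Atom : Type*} (P : Set (NormalRule Atom)) (M : Set Atom) : Prop :=
  ∀ r ∈ P, ↑r.pos ⊆ M → (∀ c ∈ r.neg, c ∉ M) → r.head ∈ M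

theorem stable_model_is_minimal_model
    {Atom : Type*} [Fintype Atom]
    (P : Set (NormalRule Atom)) (hP : P.Finite)
    (M : Set Atom) (hstable : glOp P M = M) :
    IsModel P M ∧ ∀ N : Set Atom, N ⊂ M → ¬ IsModel P N := by
  have hmono : ∀ (Q : Set (PosRule Atom)) (A B : Set Atom), A ⊆ B → TP Q A ⊆ TP Q B := by
    rintro Q A B hAB a ⟨r, hr, hh, hb⟩
    exact ⟨r, hr, hh, hb.trans hAB⟩
  -- M is a prefixed point of T_{P_M}
  have hMle : ∀ N : Set Atom, TP (reduct P M) N ⊆ N → M ⊆ N := by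
    intro N hN
    conv_lhs => rw [← hstable]
    exact sInf_le hN
  have hpre : TP (reduct P M) M ⊆ M := by
    intro a ha
    have : a ∈ glOp P M := fun N hN => hN (hmono _ _ _ (hMle N hN) ha)
    rwa [hstable] at this
  constructor
  · rintro r hr hpos hneg
    apply hpre
    exact ⟨⟨r.head, r.pos⟩, ⟨r, hr, hneg, rfl⟩, rfl, hpos⟩
  · rintro N hNM hmodel
    have hsub : N ⊆ M := hNM.1
    have hpreN : TP (reduct P M) N ⊆ N := by
      rintro a ⟨r, ⟨s, hs, hneg, rfl⟩, hh, hb⟩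
      subst hh
      exact hmodel s hs hb (fun c hc hcN => hneg c hc (hsub hcN))
    have : M ⊆ N := by exact hMle N hpreN
    exact hNM.2 this
end
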